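/- In the ring (Q[F])[X,Y,L]/(X³,Y³,L³), with E = X+Y−L, the coefficient of X²Y²L² in (L+X)(L+Y)(F+(d−1)X)³ · (F+dY−2E) · (F+(d−1)Y−L−E) · (F+(d−1)Y+X−3E) equals (9(d−1)⁴ − 42(d−1)² + 33(d−1)) · F². (This is the class computation enumerating plane curves of degree d with two nodes, before dividing by the symmetry factor 2.) -/

import Mathlib

open MvPolynomial

/-- The coefficient ring `ℚ[F,d]`: `F = X 0` is the hyperplane class of `|O(d)|` and
`d = X 1` is the formal degree parameter. -/
noncomputable abbrev CoeffRing : Type := MvPolynomial (Fin 2) ℚ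

noncomputable abbrev Fc : CoeffRing := X 0
noncomputable abbrev Dc : CoeffRing := X 1

/-- The ambient ring `(ℚ[F,d])[X,Y,L]` (of which only the quotient by `(X³,Y³,L³)` matters for
the coefficient of `X²Y²L²`): `X = X 0`, `Y = X 1`, `L = X 2`. -/
noncomputable abbrev AmbRing : Type := MvPolynomial (Fin 3) CoeffRing

noncomputable abbrev Xv : AmbRing := X 0
noncomputable abbrev Yv : AmbRing := X 1
noncomputable abbrev Lv : AmbRing := X 2
/-- The exceptional divisor class `E = X + Y − L`. -/
noncomputable abbrev Ev : AmbRing := Xv + Yv - Lv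

/-- The multi-index of the monomial `X²Y²L²`. -/
noncomputable abbrev topIdx : Fin 3 →₀ ℕ :=
  Finsupp.single 0 2 + Finsupp.single 1 2 + Finsupp.single 2 2

/-!
Apart from `(L+X)(L+Y)`, each factor is `F` plus a linear form in `X, Y, L`, so the product is
homogeneous of degree `8` in `F, X, Y, L`. The coefficient of the sextic monomial `X²Y²L²`
therefore only sees the terms choosing `F` from exactly two of the six affine factors: it is `F²`
times a sum over the fifteen four-element sets of linear parts, and each summand is the coefficient
of a product of linear forms, computed by peeling the forms off one at a time.
-/

open Finset

theorem coeff_mul_prod_add_C_of_isHomogeneous {σ ι R : Type*} [CommSemiring R]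
    {Q : MvPolynomial σ R} {q k : ℕ} (hQ : Q.IsHomogeneous q) (s : Finset ι)
    {ℓ : ι → MvPolynomial σ R} (hℓ : ∀ i ∈ s, (ℓ i).IsHomogeneous 1) (a : R)
    {m : σ →₀ ℕ} (hm : m.degree = q + k) :
    coeff m (Q * ∏ i ∈ s, (ℓ i + C a)) =
      a ^ (#s - k) * ∑ t ∈ s.powersetCard k, coeff m (Q * ∏ i ∈ t, ℓ i) := by
  classical
  have hterm : ∀ t ∈ s.powerset, coeff m (Q * ((∏ i ∈ t, ℓ i) * ∏ i ∈ s \ t, C a)) =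
      if #t = k then a ^ (#s - k) * coeff m (Q * ∏ i ∈ t, ℓ i) else 0 := by
    intro t ht
    have hts : t ⊆ s := mem_powerset.mp ht
    have hhom : (Q * ∏ i ∈ t, ℓ i).IsHomogeneous (q + #t) := by
      simpa using hQ.mul (IsHomogeneous.prod t ℓ (fun _ => 1) fun i hi => hℓ i (hts hi))
    rw [prod_const, card_sdiff_of_subset hts, ← map_pow, ← mul_assoc, mul_comm, coeff_C_mul]
    split_ifs with htk
    · rw [htk]
    · rw [hhom.coeff_eq_zero (by omega), mul_zero]
  rw [prod_add, mul_sum, coeff_sum, sum_congr rfl hterm, ← sum_filter, ← powersetCard_eq_filter,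
    mul_sum]

noncomputable def linearForm {σ R : Type*} [Fintype σ] [CommSemiring R] (u : σ → R) :
    MvPolynomial σ R :=
  ∑ i, C (u i) * X i

theorem isHomogeneous_linearForm {σ R : Type*} [Fintype σ] [CommSemiring R] (u : σ → R) :
    (linearForm u).IsHomogeneous 1 :=
  IsHomogeneous.sum _ _ _ fun i _ => isHomogeneous_C_mul_X (u i) i

noncomputable abbrev tripleIdx (a b c : ℕ) : Fin 3 →₀ ℕ :=
  Finsupp.single 0 a + Finsupp.single 1 b + Finsupp.single 2 c

theorem tripleIdx_eq_zero_iff {a b c : ℕ} : tripleIdx a b c = 0 ↔ a = 0 ∧ b = 0 ∧ c = 0 := by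
  simp [Finsupp.ext_iff, Fin.forall_fin_succ, and_assoc]

theorem tripleIdx_sub_single {a b c : ℕ} :
    tripleIdx a b c - Finsupp.single 0 1 = tripleIdx (a - 1) b c ∧
      tripleIdx a b c - Finsupp.single 1 1 = tripleIdx a (b - 1) c ∧
      tripleIdx a b c - Finsupp.single 2 1 = tripleIdx a b (c - 1) := by
  simp [Finsupp.ext_iff, Fin.forall_fin_succ]

section TripleCoeff

variable {R : Type*} [CommSemiring R]

theorem coeff_tripleIdx_one (a b c : ℕ) :
    coeff (tripleIdx a b c) (1 : MvPolynomial (Fin 3) R) =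
      if a = 0 ∧ b = 0 ∧ c = 0 then 1 else 0 := by
  rw [coeff_one]
  exact if_congr (eq_comm.trans tripleIdx_eq_zero_iff) rfl rfl

theorem coeff_tripleIdx_linearForm_mul (u : Fin 3 → R) (p : MvPolynomial (Fin 3) R) (a b c : ℕ) :
    coeff (tripleIdx a b c) (linearForm u * p) =
      (if a = 0 then 0 else u 0 * coeff (tripleIdx (a - 1) b c) p) +
      (if b = 0 then 0 else u 1 * coeff (tripleIdx a (b - 1) c) p) +
      (if c = 0 then 0 else u 2 * coeff (tripleIdx a b (c - 1)) p) := by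
  obtain ⟨h0, h1, h2⟩ := tripleIdx_sub_single (a := a) (b := b) (c := c)
  rw [linearForm, sum_mul, coeff_sum, Fin.sum_univ_three]
  simp only [mul_assoc, coeff_C_mul, coeff_X_mul', h0, h1, h2, Finsupp.mem_support_iff]
  simp

theorem coeff_tripleIdx_linearForm (u : Fin 3 → R) (a b c : ℕ) :
    coeff (tripleIdx a b c) (linearForm u) =
      (if a = 1 ∧ b = 0 ∧ c = 0 then u 0 else 0) + (if a = 0 ∧ b = 1 ∧ c = 0 then u 1 else 0) +
      (if a = 0 ∧ b = 0 ∧ c = 1 then u 2 else 0) := by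
  rw [← mul_one (linearForm u), coeff_tripleIdx_linearForm_mul]
  simp only [coeff_tripleIdx_one]
  split_ifs <;> simp_all <;> omega

end TripleCoeff

noncomputable abbrev twoNodesLinearPart : Fin 6 → AmbRing := fun i =>
  linearForm (![![Dc - 1, 0, 0], ![Dc - 1, 0, 0], ![Dc - 1, 0, 0], ![-2, Dc - 2, 2],
    ![-1, Dc - 2, 0], ![-2, Dc - 4, 3]] i)

theorem two_nodes_product_eq :
    (Lv + Xv) * (Lv + Yv) * (C Fc + C (Dc - 1) * Xv) ^ 3 * (C Fc + C Dc * Yv - 2 * Ev) *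
        (C Fc + C (Dc - 1) * Yv - Lv - Ev) * (C Fc + C (Dc - 1) * Yv + Xv - 3 * Ev) =
      linearForm ![1, 0, 1] * linearForm ![0, 1, 1] *
        ∏ i, (twoNodesLinearPart i + C Fc) := by
  simp only [twoNodesLinearPart, linearForm, Fin.prod_univ_six, Fin.sum_univ_three,
    Matrix.cons_val, map_sub, map_neg, map_one, map_zero, map_ofNat]
  ring

theorem sum_coeff_twoNodesLinearPart :
    ∑ t ∈ powersetCard 4 (univ : Finset (Fin 6)),
        coeff topIdx (linearForm ![1, 0, 1] * linearForm ![0, 1, 1] *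
          ∏ i ∈ t, twoNodesLinearPart i) =
      9 * (Dc - 1) ^ 4 - 42 * (Dc - 1) ^ 2 + 33 * (Dc - 1) := by
  rw [show powersetCard 4 (univ : Finset (Fin 6)) =
    {{0, 1, 2, 3}, {0, 1, 2, 4}, {0, 1, 2, 5}, {0, 1, 3, 4}, {0, 1, 3, 5}, {0, 1, 4, 5},
      {0, 2, 3, 4}, {0, 2, 3, 5}, {0, 2, 4, 5}, {0, 3, 4, 5}, {1, 2, 3, 4}, {1, 2, 3, 5},
      {1, 2, 4, 5}, {1, 3, 4, 5}, {2, 3, 4, 5}} by decide]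
  simp +decide only [sum_insert, sum_singleton, prod_insert, prod_singleton, mem_insert, mem_singleton, mul_assoc, coeff_tripleIdx_linearForm_mul,
    coeff_tripleIdx_linearForm, Matrix.cons_val, ↓reduceIte, mul_zero, zero_mul, add_zero,
    zero_add]
  ring

/-- In `(ℚ[F])[X,Y,L]/(X³,Y³,L³)` with `E = X+Y−L`, the coefficient of `X²Y²L²` in
`(L+X)(L+Y)(F+(d−1)X)³(F+dY−2E)(F+(d−1)Y−L−E)(F+(d−1)Y+X−3E)` equals
`(9(d−1)⁴ − 42(d−1)² + 33(d−1))·F²` — the class computation enumerating plane curves of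
degree `d` with two nodes (before dividing by the symmetry factor `2`). -/
theorem two_nodes_class_computation :
    coeff topIdx
        ((Lv + Xv) * (Lv + Yv) * (C Fc + C (Dc - 1) * Xv) ^ 3 *
          (C Fc + C Dc * Yv - 2 * Ev) *
          (C Fc + C (Dc - 1) * Yv - Lv - Ev) *
          (C Fc + C (Dc - 1) * Yv + Xv - 3 * Ev))
      = (9 * (Dc - 1) ^ 4 - 42 * (Dc - 1) ^ 2 + 33 * (Dc - 1)) * Fc ^ 2 := by
  have hQ : (linearForm ![1, 0, 1] * linearForm ![0, 1, 1] : AmbRing).IsHomogeneous (1 + 1) :=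
    (isHomogeneous_linearForm _).mul (isHomogeneous_linearForm _)
  have hdeg : topIdx.degree = 1 + 1 + 4 := by
    simp only [topIdx, map_add, Finsupp.degree_single]
  rw [two_nodes_product_eq,
    coeff_mul_prod_add_C_of_isHomogeneous hQ _ (fun i _ => isHomogeneous_linearForm _) Fc hdeg,
    sum_coeff_twoNodesLinearPart, card_univ, Fintype.card_fin, mul_comm]
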